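/- arXiv:2104.13141 — 2 statements merged into one kernel-verified Lean document; each statement's English description precedes it below -/
import Mathlib

section
/- Let Ξ be an orthonormal basis of ℝ^n and S_{Ξ,0} := ∪_{ξ∈Ξ} { x ∈ 𝕊^{n-1} : x·ξ = 0 }. If 𝒳 is a finite family of orthonormal bases of ℝ^n with #𝒳 = n-1 and the intersection ∩_{Ξ∈𝒳} S_{Ξ,0} is infinite, then this intersection has Hausdorff dimension at least 1. -/
open scoped RealInnerProductSpace

/-- For an orthonormal basis `Ξ` of `ℝⁿ`, `S_{Ξ,0}` is the set of unit vectors orthogonal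
to at least one vector of `Ξ`. -/
def SXi0 (n : ℕ) (Ξ : OrthonormalBasis (Fin n) ℝ (EuclideanSpace ℝ (Fin n))) :
    Set (EuclideanSpace ℝ (Fin n)) :=
  ⋃ i : Fin n, {x | ‖x‖ = 1 ∧ ⟪x, Ξ i⟫ = 0}

/-! Since `S_{Ξ,0}` is the unit sphere intersected with the union of the hyperplanes `(Ξ i)ᗮ`,
distributing the intersection over the union writes `⋂_{Ξ∈𝒳} S_{Ξ,0}` as a finite union of sets
`𝕊 ∩ V` with `V` a subspace. If it is infinite, one of these pieces is infinite, which forces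
`dim V ≥ 2`; then `𝕊 ∩ V` contains a great circle, and the orthogonal projection onto one of its
diameters, a Lipschitz map, sends the circle onto a segment. If `n ≤ 1` the family `𝒳` is empty
and the intersection is all of `ℝⁿ`. -/

open Metric Module

section InnerProductSpace

variable {E : Type*} [NormedAddCommGroup E] [InnerProductSpace ℝ E]

theorem one_le_dimH_sphere_inter_span_pair {e₁ e₂ : E} (h₁ : ‖e₁‖ = 1) (h₂ : ‖e₂‖ = 1)
    (h₁₂ : ⟪e₁, e₂⟫ = 0) :
    1 ≤ dimH (sphere (0 : E) 1 ∩ Submodule.span ℝ {e₁, e₂}) := by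
  have hproj : Set.Icc (-1 : ℝ) 1 ⊆
      innerSL ℝ e₁ '' (sphere (0 : E) 1 ∩ Submodule.span ℝ {e₁, e₂}) := by
    intro y hy
    have hy2 : y ^ 2 ≤ 1 := by nlinarith [hy.1, hy.2]
    set p : E := y • e₁ + √(1 - y ^ 2) • e₂
    have hp_sphere : p ∈ sphere (0 : E) 1 := by
      have horth : ⟪y • e₁, √(1 - y ^ 2) • e₂⟫ = 0 := by
        simp [real_inner_smul_left, real_inner_smul_right, h₁₂]
      have hsq := norm_add_sq_eq_norm_sq_add_norm_sq_real horth
      simp only [norm_smul, h₁, h₂, Real.norm_eq_abs, mul_one, abs_mul_abs_self,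
        Real.mul_self_sqrt (by linarith : 0 ≤ 1 - y ^ 2)] at hsq
      rw [mem_sphere_zero_iff_norm]
      nlinarith [norm_nonneg p]
    have hp_span : p ∈ Submodule.span ℝ {e₁, e₂} :=
      add_mem (Submodule.smul_mem _ _ (Submodule.subset_span (by simp)))
        (Submodule.smul_mem _ _ (Submodule.subset_span (by simp)))
    refine ⟨p, ⟨hp_sphere, hp_span⟩, ?_⟩
    simp [p, inner_add_right, real_inner_smul_right, h₁₂, h₁]
  calc (1 : ENNReal) = dimH (Set.Icc (-1 : ℝ) 1) := by
        rw [Real.dimH_of_mem_nhds (Icc_mem_nhds (by norm_num : (-1 : ℝ) < 0) one_pos),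
          finrank_self, Nat.cast_one]
    _ ≤ dimH (innerSL ℝ e₁ '' (sphere (0 : E) 1 ∩ Submodule.span ℝ {e₁, e₂})) := dimH_mono hproj
    _ ≤ _ := (innerSL ℝ e₁).lipschitz.dimH_image_le _

theorem Submodule.finite_sphere_inter_of_finrank_le_one (V : Submodule ℝ E)
    [FiniteDimensional ℝ V] (hV : finrank ℝ V ≤ 1) : (sphere (0 : E) 1 ∩ V).Finite := by
  obtain ⟨v, hv⟩ := finrank_le_one_iff.mp hV
  refine ((Set.toFinite {‖(v : E)‖⁻¹, -‖(v : E)‖⁻¹}).image fun c : ℝ ↦ c • (v : E)).subset ?_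
  rintro x ⟨hx, hxV⟩
  obtain ⟨c, hc⟩ := hv ⟨x, hxV⟩
  obtain rfl : c • (v : E) = x := congrArg Subtype.val hc
  rw [mem_sphere_zero_iff_norm, norm_smul, Real.norm_eq_abs] at hx
  refine ⟨c, ?_, rfl⟩
  rcases abs_eq (inv_nonneg.mpr (norm_nonneg (v : E))) |>.mp (eq_inv_of_mul_eq_one_left hx)
    with h | h <;> simp [h]

theorem Submodule.one_le_dimH_sphere_inter (V : Submodule ℝ E) [FiniteDimensional ℝ V]
    (hV : 2 ≤ finrank ℝ V) : 1 ≤ dimH (sphere (0 : E) 1 ∩ V) := by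
  set b := stdOrthonormalBasis ℝ V
  set i₀ : Fin (finrank ℝ V) := ⟨0, by omega⟩
  set i₁ : Fin (finrank ℝ V) := ⟨1, by omega⟩
  have horth : ⟪(b i₀ : E), b i₁⟫ = 0 := by
    simpa using b.orthonormal.2 (by simp [i₀, i₁] : i₀ ≠ i₁)
  have hspan : Submodule.span ℝ {(b i₀ : E), (b i₁ : E)} ≤ V :=
    Submodule.span_le.mpr (Set.insert_subset (b i₀).2 (Set.singleton_subset_iff.mpr (b i₁).2))
  exact (one_le_dimH_sphere_inter_span_pair (e₁ := (b i₀ : E)) (e₂ := b i₁)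
    (b.orthonormal.1 i₀) (b.orthonormal.1 i₁) horth).trans
      (dimH_mono (Set.inter_subset_inter_right _ hspan))

theorem one_le_dimH_iUnion_sphere_inter_of_infinite [FiniteDimensional ℝ E] {κ : Type*}
    [Finite κ] (V : κ → Submodule ℝ E) (h : (⋃ k, sphere (0 : E) 1 ∩ V k).Infinite) :
    1 ≤ dimH (⋃ k, sphere (0 : E) 1 ∩ V k) := by
  obtain ⟨k, hk⟩ : ∃ k, (sphere (0 : E) 1 ∩ V k).Infinite := by
    by_contra! hfin
    exact h (Set.finite_iUnion hfin)
  have hrank : 2 ≤ finrank ℝ (V k) := by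
    by_contra! hlt
    exact hk ((V k).finite_sphere_inter_of_finrank_le_one (by omega))
  exact ((V k).one_le_dimH_sphere_inter hrank).trans
    (dimH_mono (Set.subset_iUnion_of_subset k le_rfl))

end InnerProductSpace

theorem one_le_dimH_univ_of_infinite {E : Type*} [NormedAddCommGroup E] [NormedSpace ℝ E]
    [FiniteDimensional ℝ E] (h : (Set.univ : Set E).Infinite) : 1 ≤ dimH (Set.univ : Set E) := by
  have : Infinite E := Set.infinite_univ_iff.mp h
  rw [Real.dimH_univ_eq_finrank]
  exact_mod_cast finrank_pos

theorem SXi0_eq (n : ℕ) (Ξ : OrthonormalBasis (Fin n) ℝ (EuclideanSpace ℝ (Fin n))) :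
    SXi0 n Ξ = sphere 0 1 ∩ ⋃ i, ((ℝ ∙ Ξ i)ᗮ : Set (EuclideanSpace ℝ (Fin n))) := by
  ext x
  simp [SXi0, Submodule.mem_orthogonal_singleton_iff_inner_left]

theorem iInter_SXi0_eq {ι : Type*} [Nonempty ι] (n : ℕ)
    (𝒳 : ι → OrthonormalBasis (Fin n) ℝ (EuclideanSpace ℝ (Fin n))) :
    ⋂ j, SXi0 n (𝒳 j) = ⋃ f : ι → Fin n, sphere 0 1 ∩ ↑(⨅ j, (ℝ ∙ 𝒳 j (f j))ᗮ) := by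
  simp only [SXi0_eq, Submodule.coe_iInf]
  rw [← Set.inter_iInter, ← Set.inter_iUnion]
  exact congrArg _ iInf_iSup_eq

/-- If `𝒳` is a family of `n-1` orthonormal bases of `ℝⁿ` and `⋂_{Ξ∈𝒳} S_{Ξ,0}` is
infinite, then this intersection has Hausdorff dimension at least `1`. -/
theorem dimH_ge_one_of_infinite_inter (n : ℕ)
    (𝒳 : Fin (n - 1) → OrthonormalBasis (Fin n) ℝ (EuclideanSpace ℝ (Fin n)))
    (hinf : (⋂ j, SXi0 n (𝒳 j)).Infinite) :
    1 ≤ dimH (⋂ j, SXi0 n (𝒳 j)) := by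
  rcases isEmpty_or_nonempty (Fin (n - 1)) with _ | _
  · rw [Set.iInter_of_empty] at hinf ⊢
    exact one_le_dimH_univ_of_infinite hinf
  · rw [iInter_SXi0_eq] at hinf ⊢
    exact one_le_dimH_iUnion_sphere_inter_of_infinite _ hinf
end

section
/- There exist n orthonormal bases Ξ_1, …, Ξ_n of ℝ^n such that ∩_{i=1}^n S_{Ξ_i,0} = ∅, where S_{Ξ,0} := ∪_{ξ∈Ξ} { x ∈ 𝕊^{n-1} : x·ξ = 0 }. -/
open scoped RealInnerProductSpace

namespace ExistsBasesAux

open Matrix MvPolynomial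

variable {n : ℕ}

/-- For a real skew-symmetric matrix `B`, `1 + B` has nonzero determinant. -/
lemma skew_det_ne_zero {B : Matrix (Fin n) (Fin n) ℝ} (hB : Bᵀ = -B) :
    (1 + B).det ≠ 0 := by
  intro h
  obtain ⟨v, hv, hv0⟩ := (Matrix.exists_mulVec_eq_zero_iff).mpr h
  have h3 : v ⬝ᵥ (B *ᵥ v) = (Bᵀ *ᵥ v) ⬝ᵥ v := by
    rw [Matrix.dotProduct_mulVec, ← Matrix.mulVec_transpose]
  rw [hB, Matrix.neg_mulVec, neg_dotProduct, dotProduct_comm] at h3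
  have h2 : v ⬝ᵥ (B *ᵥ v) = 0 := by
    rw [dotProduct_comm]; linarith
  have h1 : v ⬝ᵥ ((1 + B) *ᵥ v) = 0 := by rw [hv0, dotProduct_zero]
  rw [Matrix.add_mulVec, Matrix.one_mulVec, dotProduct_add, h2, add_zero] at h1
  exact hv (dotProduct_self_eq_zero.mp h1)

/-- The skew-symmetric matrix built from parameters `a` (the `i`-th one). -/
def bmat (R : Type*) [CommRing R] (a : Fin n × Fin n × Fin n → R) (i : Fin n) :
    Matrix (Fin n) (Fin n) R :=
  (Matrix.of fun j k => a (i, j, k)) - (Matrix.of fun j k => a (i, j, k))ᵀ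

lemma bmat_skew (R : Type*) [CommRing R] (a : Fin n × Fin n × Fin n → R) (i : Fin n) :
    (bmat R a i)ᵀ = -bmat R a i := by
  simp [bmat, Matrix.transpose_sub, Matrix.transpose_transpose, neg_sub]

/-- Polynomial (adjugate-based) version of the Cayley transform of `bmat`. -/
def nmat (R : Type*) [CommRing R] (a : Fin n × Fin n × Fin n → R) (i : Fin n) :
    Matrix (Fin n) (Fin n) R :=
  (1 - bmat R a i) * Matrix.adjugate (1 + bmat R a i)

/-- The transversal matrix: row `i` is row `f i` of `nmat R a i`. -/
def tmat (R : Type*) [CommRing R] (a : Fin n × Fin n × Fin n → R) (f : Fin n → Fin n) :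
    Matrix (Fin n) (Fin n) R :=
  Matrix.of fun i k => nmat R a i (f i) k

lemma map_bmat {R S : Type*} [CommRing R] [CommRing S] (φ : R →+* S)
    (a : Fin n × Fin n × Fin n → R) (i : Fin n) :
    φ.mapMatrix (bmat R a i) = bmat S (φ ∘ a) i := by
  ext j k
  simp [bmat, Matrix.sub_apply, Matrix.transpose_apply]

lemma map_nmat {R S : Type*} [CommRing R] [CommRing S] (φ : R →+* S)
    (a : Fin n × Fin n × Fin n → R) (i : Fin n) :
    φ.mapMatrix (nmat R a i) = nmat S (φ ∘ a) i := by
  have h1 : φ.mapMatrix (1 - bmat R a i) = 1 - bmat S (φ ∘ a) i := by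
    rw [_root_.map_sub, _root_.map_one, map_bmat]
  have h2 : φ.mapMatrix (1 + bmat R a i) = 1 + bmat S (φ ∘ a) i := by
    rw [_root_.map_add, _root_.map_one, map_bmat]
  rw [nmat, nmat, _root_.map_mul, RingHom.map_adjugate, h1, h2]

lemma map_det_tmat {R S : Type*} [CommRing R] [CommRing S] (φ : R →+* S)
    (a : Fin n × Fin n × Fin n → R) (f : Fin n → Fin n) :
    φ ((tmat R a f).det) = (tmat S (φ ∘ a) f).det := by
  rw [RingHom.map_det]
  congr 1
  ext i k
  have := congrFun (congrFun (congrArg (fun M => (M : Matrix (Fin n) (Fin n) S))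
    (map_nmat φ a i)) (f i)) k
  simpa [tmat, RingHom.mapMatrix_apply, Matrix.map_apply] using this

/-- The witness parameter point for a transversal function `f`. -/
def wit (f : Fin n → Fin n) : Fin n × Fin n × Fin n → ℝ :=
  fun s => Matrix.single s.1 (f s.1) (1 : ℝ) s.2.1 s.2.2

lemma wit_row_id (f : Fin n → Fin n) (i k : Fin n) :
    (1 - bmat ℝ (wit f) i) (f i) k = (1 + bmat ℝ (wit f) i) i k := by
  simp only [bmat, wit, Matrix.sub_apply, Matrix.add_apply, Matrix.one_apply,
    Matrix.transpose_apply, Matrix.of_apply, Matrix.single, and_true, true_and,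
    eq_self_iff_true]
  have hiff : (i = f i ∧ f i = k) ↔ (i = k ∧ f i = i) := by
    constructor
    · rintro ⟨p, q⟩; exact ⟨p.trans q, p.symm⟩
    · rintro ⟨p, q⟩; exact ⟨q.symm, q.trans p⟩
  rw [if_congr hiff rfl rfl]
  ring

lemma nmat_wit_row (f : Fin n → Fin n) (i k : Fin n) :
    nmat ℝ (wit f) i (f i) k =
      (1 + bmat ℝ (wit f) i).det * (if i = k then 1 else 0) := by
  have key : nmat ℝ (wit f) i (f i) k
      = ((1 + bmat ℝ (wit f) i) * Matrix.adjugate (1 + bmat ℝ (wit f) i)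
          : Matrix (Fin n) (Fin n) ℝ) i k := by
    rw [nmat, Matrix.mul_apply, Matrix.mul_apply]
    exact Finset.sum_congr rfl fun l _ => by rw [wit_row_id]
  rw [key, Matrix.mul_adjugate, Matrix.smul_apply, Matrix.one_apply, smul_eq_mul]

lemma tmat_wit (f : Fin n → Fin n) :
    tmat ℝ (wit f) f = Matrix.diagonal (fun i => (1 + bmat ℝ (wit f) i).det) := by
  ext i k
  rw [tmat, Matrix.of_apply, nmat_wit_row, Matrix.diagonal_apply]
  split_ifs <;> simp

lemma det_tmat_wit_ne_zero (f : Fin n → Fin n) : (tmat ℝ (wit f) f).det ≠ 0 := by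
  rw [tmat_wit, Matrix.det_diagonal]
  exact Finset.prod_ne_zero_iff.mpr fun i _ => skew_det_ne_zero (bmat_skew ℝ (wit f) i)

/-- There is a parameter point at which all the transversal determinants are nonzero. -/
lemma exists_good (n : ℕ) : ∃ a : Fin n × Fin n × Fin n → ℝ,
    ∀ f : Fin n → Fin n, (tmat ℝ a f).det ≠ 0 := by
  classical
  set σ := (Fin n × Fin n × Fin n)
  set Xp : σ → MvPolynomial σ ℝ := fun s => MvPolynomial.X s with hXp
  set P : MvPolynomial σ ℝ := ∏ f : Fin n → Fin n, (tmat (MvPolynomial σ ℝ) Xp f).det with hP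
  have hPf : ∀ f : Fin n → Fin n, (tmat (MvPolynomial σ ℝ) Xp f).det ≠ 0 := by
    intro f h0
    apply det_tmat_wit_ne_zero f
    have := map_det_tmat (MvPolynomial.eval (wit f)) Xp f
    rw [h0, map_zero] at this
    have hcomp : (MvPolynomial.eval (wit f)) ∘ Xp = wit f := by
      funext s; simp [hXp]
    rw [hcomp] at this
    exact this.symm
  have hPne : P ≠ 0 := Finset.prod_ne_zero_iff.mpr fun f _ => hPf f
  have : ∃ a : σ → ℝ, MvPolynomial.eval a P ≠ 0 := by
    by_contra h
    push_neg at h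
    exact hPne (MvPolynomial.funext fun a => by rw [h a, map_zero])
  obtain ⟨a, ha⟩ := this
  refine ⟨a, fun f hf => ha ?_⟩
  rw [hP, map_prod]
  apply Finset.prod_eq_zero (Finset.mem_univ f)
  rw [map_det_tmat]
  have hcomp : (MvPolynomial.eval a) ∘ Xp = a := by funext s; simp [hXp]
  rw [hcomp, hf]

/-- The Cayley transform of a skew matrix is orthogonal (rows orthonormal form). -/
lemma cayley_orth {B : Matrix (Fin n) (Fin n) ℝ} (hB : Bᵀ = -B) :
    ((1 - B) * (1 + B)⁻¹) * ((1 - B) * (1 + B)⁻¹)ᵀ = 1 := by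
  have hdp : IsUnit (1 + B).det := (skew_det_ne_zero hB).isUnit
  have hdm : IsUnit (1 - B).det := by
    have h : (-B)ᵀ = -(-B) := by rw [Matrix.transpose_neg, hB, neg_neg]
    have := (skew_det_ne_zero h).isUnit
    simpa [sub_eq_add_neg] using this
  have htr : ((1 - B) * (1 + B)⁻¹)ᵀ = (1 - B)⁻¹ * (1 + B) := by
    rw [Matrix.transpose_mul, Matrix.transpose_nonsing_inv, Matrix.transpose_add,
      Matrix.transpose_one, hB, Matrix.transpose_sub, Matrix.transpose_one, hB]
    rw [sub_neg_eq_add, ← sub_eq_add_neg]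
  rw [htr]
  have hcomm : ((1 + B) * (1 - B))⁻¹ = ((1 - B) * (1 + B))⁻¹ := by
    congr 1
    noncomm_ring
  have hmid : (1 + B)⁻¹ * (1 - B)⁻¹ = (1 - B)⁻¹ * (1 + B)⁻¹ := by
    rw [← Matrix.mul_inv_rev, ← hcomm, Matrix.mul_inv_rev]
  calc (1 - B) * (1 + B)⁻¹ * ((1 - B)⁻¹ * (1 + B))
      = (1 - B) * ((1 + B)⁻¹ * (1 - B)⁻¹) * (1 + B) := by
        simp only [Matrix.mul_assoc]
    _ = (1 - B) * ((1 - B)⁻¹ * (1 + B)⁻¹) * (1 + B) := by rw [hmid]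
    _ = ((1 - B) * (1 - B)⁻¹) * ((1 + B)⁻¹ * (1 + B)) := by
        simp only [Matrix.mul_assoc]
    _ = 1 := by
        rw [Matrix.mul_nonsing_inv _ hdm, Matrix.nonsing_inv_mul _ hdp, one_mul]

/-- `nmat` is the determinant rescaling of the Cayley transform. -/
lemma nmat_eq_smul (a : Fin n × Fin n × Fin n → ℝ) (i : Fin n) :
    nmat ℝ a i = (1 + bmat ℝ a i).det • ((1 - bmat ℝ a i) * (1 + bmat ℝ a i)⁻¹) := by
  have hd : IsUnit (1 + bmat ℝ a i).det := (skew_det_ne_zero (bmat_skew ℝ a i)).isUnit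
  have hadj : (1 + bmat ℝ a i).det • (1 + bmat ℝ a i)⁻¹
      = Matrix.adjugate (1 + bmat ℝ a i) := by
    rw [Matrix.inv_def, smul_smul, Ring.mul_inverse_cancel _ hd, one_smul]
  rw [nmat, ← hadj, Matrix.mul_smul]

end ExistsBasesAux

/-- There exist `n` orthonormal bases `Ξ_1, …, Ξ_n` of `ℝⁿ` with
`⋂_{i=1}^n S_{Ξ_i,0} = ∅`. -/
theorem exists_bases_empty_inter (n : ℕ) (hn : 1 ≤ n) :
    ∃ Ξ : Fin n → OrthonormalBasis (Fin n) ℝ (EuclideanSpace ℝ (Fin n)),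
      ⋂ i, SXi0 n (Ξ i) = ∅ := by
  classical
  open ExistsBasesAux Matrix in
  obtain ⟨a, ha⟩ := ExistsBasesAux.exists_good n
  haveI : Nonempty (Fin n) := ⟨⟨0, hn⟩⟩
  set B : Fin n → Matrix (Fin n) (Fin n) ℝ := fun i => ExistsBasesAux.bmat ℝ a i with hB
  set Q : Fin n → Matrix (Fin n) (Fin n) ℝ := fun i => (1 - B i) * (1 + B i)⁻¹ with hQ
  -- the candidate basis vectors: rows of `Q i`
  set v : Fin n → Fin n → EuclideanSpace ℝ (Fin n) :=
    fun i j => (WithLp.equiv 2 (Fin n → ℝ)).symm (Q i j) with hv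
  have hinner : ∀ i j j', ⟪v i j, v i j'⟫ = (Q i * (Q i)ᵀ) j j' := by
    intro i j j'
    rw [PiLp.inner_apply, Matrix.mul_apply]
    simp [hv, Matrix.transpose_apply, mul_comm]
  have horth : ∀ i, Q i * (Q i)ᵀ = 1 := fun i =>
    ExistsBasesAux.cayley_orth (ExistsBasesAux.bmat_skew ℝ a i)
  have hon : ∀ i, Orthonormal ℝ (v i) := by
    intro i
    rw [orthonormal_iff_ite]
    intro j j'
    rw [hinner, horth i, Matrix.one_apply]
  have hsp : ∀ i, ⊤ ≤ Submodule.span ℝ (Set.range (v i)) := by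
    intro i
    refine ge_of_eq ?_
    exact ((hon i).linearIndependent.span_eq_top_of_card_eq_finrank
      (by simp)).symm ▸ rfl
  refine ⟨fun i => OrthonormalBasis.mk (hon i) (hsp i), ?_⟩
  rw [Set.eq_empty_iff_forall_notMem]
  intro x hx
  have hx' : ∀ i : Fin n, ∃ j : Fin n, ‖x‖ = 1 ∧ ⟪x, v i j⟫ = 0 := by
    intro i
    have := Set.mem_iInter.mp hx i
    rw [SXi0, Set.mem_iUnion] at this
    obtain ⟨j, hj⟩ := this
    exact ⟨j, by simpa [OrthonormalBasis.coe_mk] using hj⟩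
  choose f hnorm hperp using hx'
  -- build the transversal matrix and derive x = 0
  have hdet := ha f
  set y : Fin n → ℝ := (WithLp.equiv 2 (Fin n → ℝ)) x with hy
  have hmv : ExistsBasesAux.tmat ℝ a f *ᵥ y = 0 := by
    funext i
    have hrow : ∀ k, ExistsBasesAux.tmat ℝ a f i k = (1 + B i).det * Q i (f i) k := by
      intro k
      rw [ExistsBasesAux.tmat, Matrix.of_apply, ExistsBasesAux.nmat_eq_smul,
        Matrix.smul_apply, smul_eq_mul]
    have hsum : ∑ k, Q i (f i) k * y k = 0 := by
      have := hperp i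
      rw [PiLp.inner_apply] at this
      simpa [hv, hy, mul_comm] using this
    rw [Matrix.mulVec, dotProduct]
    simp only [hrow, mul_assoc, ← Finset.mul_sum, Pi.zero_apply]
    rw [hsum, mul_zero]
  have hy0 : y = 0 := by
    by_contra h
    exact hdet (Matrix.exists_mulVec_eq_zero_iff.mp ⟨y, h, hmv⟩)
  have : x = 0 := by
    have : (WithLp.equiv 2 (Fin n → ℝ)).symm y = x := by simp [hy]
    rw [← this, hy0]
    simp
  rw [this, norm_zero] at hnorm
  exact one_ne_zero (hnorm ⟨0, hn⟩).symm
end
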